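/- A Hamiltonian cycle of the 2n×2n grid graph that is invariant under the 90° rotation exists only if 2n ≡ 2 (mod 4); equivalently, if n is even, no Hamiltonian cycle of the 2n×2n grid is invariant under 90° rotation. -/

import Mathlib

/-!
Parametrize the cycle by `ZMod L`, `L = 4n²`. A symmetry of the grid that preserves the cycle
sends consecutive vertices to consecutive vertices, so it acts on `ZMod L` as `k ↦ c + k` or
`k ↦ c - k`. A reflection would make the half-turn fix a vertex, which it does not on an even
grid. For a translation, the rotation has order four, so `4c = 0`, that is `n² ∣ c`, and `c` is
even; but the rotation swaps the two colour classes of the chessboard colouring while moving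
along the cycle by `c` steps, so `c` is odd.
-/

/-- The grid graph `P_m × P_n`. -/
def gridGraph (m n : ℕ) : SimpleGraph (Fin m × Fin n) :=
  SimpleGraph.fromRel (fun a b =>
    (a.1 = b.1 ∧ a.2.val + 1 = b.2.val) ∨ (a.2 = b.2 ∧ a.1.val + 1 = b.1.val))

/-- 90° rotation of the `m × m` grid: `(i, j) ↦ (j, m-1-i)`. -/
def rot90 (m : ℕ) : Fin m × Fin m → Fin m × Fin m := fun p => (p.2, p.1.rev)

open Function

theorem ZMod.eq_add_or_eq_sub_of_injective {L : ℕ} [NeZero L] (h2 : (2 : ZMod L) ≠ 0)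
    {τ : ZMod L → ZMod L} (hτ : Injective τ)
    (hstep : ∀ k, τ (k + 1) = τ k + 1 ∨ τ (k + 1) = τ k - 1) :
    (∀ k, τ k = τ 0 + k) ∨ ∀ k, τ k = τ 0 - k := by
  have hback (k : ZMod L) : τ (k + 1 + 1) ≠ τ k := fun h =>
    h2 (by linear_combination hτ h)
  have hconst (k : ZMod L) : τ (k + 1 + 1) - τ (k + 1) = τ (k + 1) - τ k := by
    rcases hstep k with h | h <;> rcases hstep (k + 1) with h' | h'
    · rw [h', h]; ring
    · exact absurd (by rw [h', h]; ring) (hback k)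
    · exact absurd (by rw [h', h]; ring) (hback k)
    · rw [h', h]; ring
  have hdiff (m : ℕ) : τ ((m : ZMod L) + 1) - τ m = τ 1 - τ 0 := by
    induction m with
    | zero => simp
    | succ m ih => push_cast; rw [hconst, ih]
  have hlin (m : ℕ) : τ m = τ 0 + m * (τ 1 - τ 0) := by
    induction m with
    | zero => simp
    | succ m ih => push_cast; linear_combination hdiff m + ih
  have hlin' (k : ZMod L) : τ k = τ 0 + k * (τ 1 - τ 0) := by
    simpa using hlin k.val
  rcases hstep 0 with h | h <;> rw [zero_add] at h
  · exact .inl fun k => by rw [hlin' k, h]; ring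
  · exact .inr fun k => by rw [hlin' k, h]; ring

namespace SimpleGraph.Walk

variable {V : Type*} {G : SimpleGraph V} {u : V}

def cycleVert (p : G.Walk u u) (k : ZMod p.length) : V := p.getVert k.val

@[simp]
theorem cycleVert_zero (p : G.Walk u u) : p.cycleVert 0 = u := by
  simp [cycleVert]

theorem cycleVert_natCast (p : G.Walk u u) {i : ℕ} (hi : i ≤ p.length) :
    p.cycleVert i = p.getVert i := by
  rcases hi.lt_or_eq with hi | rfl
  · rw [cycleVert, ZMod.val_cast_of_lt hi]
  · rw [ZMod.natCast_self, cycleVert_zero, getVert_length]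

theorem mem_edges_iff_exists_cycleVert (p : G.Walk u u) [NeZero p.length] {e : Sym2 V} :
    e ∈ p.edges ↔ ∃ k, e = s(p.cycleVert k, p.cycleVert (k + 1)) := by
  induction e with
  | h x y =>
    rw [mk_mem_edges_iff_exists]
    constructor
    · rintro ⟨i, hi, he⟩
      refine ⟨i, ?_⟩
      rw [← he, cycleVert_natCast p hi.le, ← Nat.cast_succ, cycleVert_natCast p hi]
    · rintro ⟨k, he⟩
      refine ⟨k.val, ZMod.val_lt k, ?_⟩
      rw [he, ← cycleVert_natCast p (ZMod.val_lt k).le, ← cycleVert_natCast p (ZMod.val_lt k),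
        Nat.cast_succ, ZMod.natCast_zmod_val]

theorem IsCycle.neZero_length {p : G.Walk u u} (hp : p.IsCycle) : NeZero p.length :=
  ⟨by have := hp.three_le_length; omega⟩

theorem IsCycle.cycleVert_injective {p : G.Walk u u} (hp : p.IsCycle) :
    Injective p.cycleVert := by
  have := hp.neZero_length
  intro a b h
  apply ZMod.val_injective
  exact hp.getVert_injOn' (Nat.le_sub_one_of_lt (ZMod.val_lt a))
    (Nat.le_sub_one_of_lt (ZMod.val_lt b)) h

theorem IsHamiltonianCycle.cycleVert_bijective [DecidableEq V] {p : G.Walk u u} (hp : p.IsHamiltonianCycle) :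
    Bijective p.cycleVert := by
  refine ⟨hp.isCycle.cycleVert_injective, fun x => ?_⟩
  obtain ⟨i, hix, hi⟩ := mem_support_iff_exists_getVert.mp (hp.mem_support x)
  exact ⟨i, by rw [cycleVert_natCast p hi, hix]⟩

theorem IsHamiltonianCycle.exists_cycleVert_add_or_sub [DecidableEq V] {p : G.Walk u u}
    (hp : p.IsHamiltonianCycle) {f : V → V} (hf : Injective f)
    (hfp : ∀ e ∈ p.edges, e.map f ∈ p.edges) :
    ∃ c, (∀ k, f (p.cycleVert k) = p.cycleVert (c + k)) ∨
      ∀ k, f (p.cycleVert k) = p.cycleVert (c - k) := by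
  have := hp.isCycle.neZero_length
  have hv := hp.cycleVert_bijective
  let τ k := (Equiv.ofBijective _ hv).symm (f (p.cycleVert k))
  have hτ (k) : p.cycleVert (τ k) = f (p.cycleVert k) := (Equiv.ofBijective _ hv).apply_symm_apply _
  have hτinj : Injective τ := fun a b h => hv.1 <| hf <| by rw [← hτ, ← hτ, h]
  have h2 : (2 : ZMod p.length) ≠ 0 := by
    have := hp.isCycle.three_le_length
    rw [← Nat.cast_ofNat, ne_eq, ZMod.natCast_eq_zero_iff]
    exact fun h => by have := Nat.le_of_dvd two_pos h; omega
  have hstep (k) : τ (k + 1) = τ k + 1 ∨ τ (k + 1) = τ k - 1 := by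
    have he := hfp _ ((mem_edges_iff_exists_cycleVert p).mpr ⟨k, rfl⟩)
    obtain ⟨m, hm⟩ := (mem_edges_iff_exists_cycleVert p).mp he
    rw [Sym2.map_mk, ← hτ, ← hτ, Sym2.eq_iff] at hm
    rcases hm with ⟨h0, h1⟩ | ⟨h0, h1⟩
    · exact .inl (by rw [hv.1 h0, hv.1 h1])
    · exact .inr (by rw [hv.1 h0, hv.1 h1]; ring)
  refine ⟨τ 0, ?_⟩
  rcases ZMod.eq_add_or_eq_sub_of_injective h2 hτinj hstep with h | h
  · exact .inl fun k => by rw [← hτ, h]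
  · exact .inr fun k => by rw [← hτ, h]

end SimpleGraph.Walk

def gridParity {m n : ℕ} (x : Fin m × Fin n) : ZMod 2 := ((x.1 + x.2 : ℕ) : ZMod 2)

theorem gridParity_of_adj {m n : ℕ} {a b : Fin m × Fin n} (h : (gridGraph m n).Adj a b) :
    gridParity b = gridParity a + 1 := by
  obtain ⟨-, h⟩ := h
  have hsum : b.1.val + b.2.val + 1 = a.1.val + a.2.val ∨
      a.1.val + a.2.val + 1 = b.1.val + b.2.val := by
    rcases h with (⟨h1, h2⟩ | ⟨h1, h2⟩) | (⟨h1, h2⟩ | ⟨h1, h2⟩) <;> rw [h1] at * <;> omega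
  rw [gridParity, gridParity, ← Nat.cast_succ, ZMod.natCast_eq_natCast_iff']
  omega

theorem gridParity_getVert {m n : ℕ} {u v : Fin m × Fin n} (p : (gridGraph m n).Walk u v)
    {i : ℕ} (hi : i ≤ p.length) : gridParity (p.getVert i) = gridParity u + i := by
  induction i with
  | zero => simp
  | succ i ih =>
    rw [gridParity_of_adj (p.adj_getVert_succ hi), ih (by omega)]
    push_cast; ring

theorem gridParity_cycleVert {m n : ℕ} {u : Fin m × Fin n} (p : (gridGraph m n).Walk u u)
    [NeZero p.length] (k : ZMod p.length) : gridParity (p.cycleVert k) = gridParity u + k.val :=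
  gridParity_getVert p (ZMod.val_lt k).le

theorem rot90_injective (m : ℕ) : Injective (rot90 m) := fun _ _ h =>
  Prod.ext (Fin.rev_injective (congrArg Prod.snd h)) (congrArg Prod.fst h)

theorem rot90_rot90_rot90_rot90 (m : ℕ) (x : Fin m × Fin m) :
    rot90 m (rot90 m (rot90 m (rot90 m x))) = x := by
  simp [rot90]

theorem rot90_rot90_ne {m : ℕ} (hm : Even m) (x : Fin m × Fin m) : rot90 m (rot90 m x) ≠ x := by
  intro h
  have h1 : x.1.rev.val = x.1.val := congrArg (Fin.val ∘ Prod.fst) h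
  rw [Fin.val_rev] at h1
  obtain ⟨r, rfl⟩ := hm
  omega

theorem gridParity_rot90 {m : ℕ} (hm : Even m) (x : Fin m × Fin m) :
    gridParity (rot90 m x) = gridParity x + 1 := by
  rw [rot90, gridParity, gridParity, ← Nat.cast_succ, ZMod.natCast_eq_natCast_iff']
  simp only [Fin.val_rev]
  obtain ⟨r, rfl⟩ := hm
  omega

/-- If `n` is even (i.e. `2n ≢ 2 (mod 4)`), then no Hamiltonian cycle of the
`2n × 2n` grid graph is invariant under the 90° rotation. -/
theorem no_rot90_invariant_hamiltonian_cycle_of_even (n : ℕ) (hn : Even n) :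
    ¬ ∃ (v : Fin (2*n) × Fin (2*n)) (p : (gridGraph (2*n) (2*n)).Walk v v),
      p.IsHamiltonianCycle ∧ ∀ e ∈ p.edges, Sym2.map (rot90 (2*n)) e ∈ p.edges := by
  rintro ⟨v, p, hp, hinv⟩
  have hm : Even (2 * n) := even_two_mul n
  obtain ⟨c, hrot | hrefl⟩ := hp.exists_cycleVert_add_or_sub (rot90_injective _) hinv
  · have := hp.isCycle.neZero_length
    have h4c : 4 * c = 0 := by
      apply hp.isCycle.cycleVert_injective
      rw [show 4 * c = c + (c + (c + (c + 0))) by ring, ← hrot, ← hrot, ← hrot, ← hrot,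
        rot90_rot90_rot90_rot90]
    have hodd : Odd c.val := by
      have hc : p.cycleVert c = rot90 (2 * n) v := by simpa using (hrot 0).symm
      have h := gridParity_cycleVert p c
      rw [hc, gridParity_rot90 hm] at h
      exact ZMod.natCast_eq_one_iff_odd.mp (add_left_cancel h).symm
    have hdvd : n ^ 2 ∣ c.val := by
      have hL : p.length = 4 * n ^ 2 := by
        rw [hp.length_eq, Fintype.card_prod, Fintype.card_fin]; ring
      apply Nat.dvd_of_mul_dvd_mul_left (by norm_num : 0 < 4)
      rw [← hL, ← ZMod.natCast_eq_zero_iff]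
      push_cast
      rw [ZMod.natCast_zmod_val, h4c]
    exact Nat.not_even_iff_odd.mpr hodd <|
      even_iff_two_dvd.mpr ((even_iff_two_dvd.mp (hn.pow_of_ne_zero two_ne_zero)).trans hdvd)
  · exact rot90_rot90_ne hm (p.cycleVert 0) (by rw [hrefl, hrefl, sub_sub_cancel])
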